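/- Evaluation context typings for configurations in PolyVGR: if Γ;Σ ⊢ 𝔽[C] for a configuration context 𝔽 and configuration C, then there exist Γ' and Σ' such that Γ';Σ' ⊢ C, and moreover for every configuration C', if Γ';Σ' ⊢ C' then Γ;Σ ⊢ 𝔽[C']. -/

import Mathlib

set_option maxHeartbeats 1000000

inductive Label : Type
  | l1 | l2
deriving DecidableEq, Repr

mutual

/-- Kinds of PolyVGR. -/
inductive Kind : Type
  | type : Kind
  | session : Kind
  | state : Kind
  | shape : Kind
  | dom : Ty → Kind            -- Dom 𝕊, indexed by a shape
  | arr : Kind → Kind → Kind   -- arrow kinds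

/-- Types of PolyVGR (including session types, shapes, domains, states). -/
inductive Ty : Type
  | var : String → Ty
  | app : Ty → Ty → Ty
  | lam : String → Ty → Ty → Ty              -- λ(α : Dom 𝕊). T
  | all : String → Kind → Env → Ty → Ty      -- ∀(α:κ, C). T
  | arrT : Ty → Ty → Env → Ty → Ty → Ty      -- Σ₁;T₁ → ∃Γ'.(Σ₂;T₂)
  | chan : Ty → Ty                           -- Chan D
  | ap : Ty → Ty                             -- [S]
  | unit : Ty
  | pair : Ty → Ty → Ty
  | ssend : String → Ty → Ty → Ty → Ty → Ty  -- !(∃α:Dom 𝕊.(Σ;T)).S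
  | srecv : String → Ty → Ty → Ty → Ty → Ty  -- ?(∃α:Dom 𝕊.(Σ;T)).S
  | schoice : Ty → Ty → Ty                   -- ⊕(S₁,S₂)
  | sbranch : Ty → Ty → Ty                   -- &(S₁,S₂)
  | sEnd : Ty
  | dual : Ty → Ty
  | sh0 : Ty
  | sh1 : Ty
  | shpair : Ty → Ty → Ty
  | dzero : Ty
  | dmerge : Ty → Ty → Ty
  | dproj : Label → Ty → Ty
  | stEmpty : Ty
  | stBind : Ty → Ty → Ty                    -- D : S
  | stMerge : Ty → Ty → Ty                   -- Σ₁, Σ₂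

/-- Type environments (also used for constraint lists). -/
inductive Env : Type
  | nil : Env
  | consVal : Env → String → Ty → Env
  | consKind : Env → String → Kind → Env
  | consCstr : Env → Ty → Ty → Env           -- D₁ # D₂

end

def Label.pick : Label → Ty → Ty → Ty
  | .l1, t, _ => t
  | .l2, _, t => t

namespace Env

def append : Env → Env → Env
  | g, .nil => g
  | g, .consVal g' x t => .consVal (g.append g') x t
  | g, .consKind g' a k => .consKind (g.append g') a k
  | g, .consCstr g' d1 d2 => .consCstr (g.append g') d1 d2

/-- All names bound by the environment. -/
def boundNames : Env → List String
  | .nil => []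
  | .consVal g x _ => x :: g.boundNames
  | .consKind g a _ => a :: g.boundNames
  | .consCstr g _ _ => g.boundNames

/-- Names of domain-kinded type variables. -/
def domVars : Env → List String
  | .nil => []
  | .consVal g _ _ => g.domVars
  | .consKind g a (Kind.dom _) => a :: g.domVars
  | .consKind g _ _ => g.domVars
  | .consCstr g _ _ => g.domVars

/-- Is this an environment consisting only of domain-kinded bindings? -/
def isDomEnv : Env → Prop
  | .nil => True
  | .consKind g _ (Kind.dom _) => g.isDomEnv
  | _ => False

/-- Kinds kept by the restriction Γ|⁻. -/
def keepKind : Kind → Bool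
  | .shape => true
  | .session => true
  | .arr (.dom _) .type => true
  | .arr (.dom _) .state => true
  | _ => false

/-- Context restriction Γ|⁻: remove value bindings, constraints, and
    bindings of kinds Dom 𝕊, State, Type. -/
def restrictNonDom : Env → Env
  | .nil => .nil
  | .consVal g _ _ => g.restrictNonDom
  | .consCstr g _ _ => g.restrictNonDom
  | .consKind g a k =>
      if keepKind k then .consKind g.restrictNonDom a k else g.restrictNonDom

/-- Context restriction Γ|ᵈ: keep only domain-kinded bindings. -/
def restrictOnlyDom : Env → Env
  | .nil => .nil
  | .consVal g _ _ => g.restrictOnlyDom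
  | .consCstr g _ _ => g.restrictOnlyDom
  | .consKind g a (Kind.dom s) => .consKind g.restrictOnlyDom a (Kind.dom s)
  | .consKind g _ _ => g.restrictOnlyDom

def addCstrs (g : Env) (ps : List (String × String)) : Env :=
  ps.foldl (fun acc p => Env.consCstr acc (Ty.var p.1) (Ty.var p.2)) g

/-- Disjoint context extension Γ₁ ⋉ Γ₂. -/
def djE (g1 g2 : Env) : Env :=
  let d1 := g1.domVars
  let d2 := g2.domVars
  let c2 := (d2.product d2).filter (fun p => p.1 ≠ p.2)
  let c12 := d1.product d2
  addCstrs (addCstrs (g1.append g2) c2) c12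

end Env

infixl:65 " ⋉ " => Env.djE

/-- Membership of a value binding in an environment. -/
inductive Env.MemVal : Env → String → Ty → Prop
  | here : Env.MemVal (.consVal g x t) x t
  | skipVal : Env.MemVal g x t → Env.MemVal (.consVal g y s) x t
  | skipKind : Env.MemVal g x t → Env.MemVal (.consKind g a k) x t
  | skipCstr : Env.MemVal g x t → Env.MemVal (.consCstr g d1 d2) x t

/-- Membership of a kind binding in an environment. -/
inductive Env.MemKind : Env → String → Kind → Prop
  | here : Env.MemKind (.consKind g a k) a k
  | skipVal : Env.MemKind g a k → Env.MemKind (.consVal g y s) a k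
  | skipKind : Env.MemKind g a k → Env.MemKind (.consKind g b k') a k
  | skipCstr : Env.MemKind g a k → Env.MemKind (.consCstr g d1 d2) a k

/-- Membership of a disjointness constraint in an environment. -/
inductive Env.MemCstr : Env → Ty → Ty → Prop
  | here : Env.MemCstr (.consCstr g d1 d2) d1 d2
  | skipVal : Env.MemCstr g d1 d2 → Env.MemCstr (.consVal g y s) d1 d2
  | skipKind : Env.MemCstr g d1 d2 → Env.MemCstr (.consKind g b k') d1 d2
  | skipCstr : Env.MemCstr g d1 d2 → Env.MemCstr (.consCstr g d1' d2') d1 d2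

/-- Domains bound in a state. -/
def stDoms : Ty → List Ty
  | .stBind d _ => [d]
  | .stMerge s1 s2 => stDoms s1 ++ stDoms s2
  | _ => []

/-- Constraint environment asserting disjointness of the domains of two states. -/
def stDisjCstr (s1 s2 : Ty) : Env :=
  ((stDoms s1).product (stDoms s2)).foldl
    (fun g p => Env.consCstr g p.1 p.2) Env.nil

mutual

/-- Values (A-normal form). -/
inductive Val : Type
  | var : String → Val
  | chan : Ty → Val
  | unit : Val
  | pair : Val → Val → Val
  | lam : Ty → String → Ty → Exp → Val      -- λ(Σ; x:T). e
  | tlam : String → Kind → Env → Val → Val  -- Λ(α:κ, C). v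

/-- Expressions (A-normal form). -/
inductive Exp : Type
  | val : Val → Exp
  | lete : String → Exp → Exp → Exp
  | app : Val → Val → Exp
  | proj : Label → Val → Exp
  | tapp : Val → Ty → Exp
  | fork : Val → Exp
  | new : Ty → Exp
  | accept : Val → Exp
  | request : Val → Exp
  | send : Val → Val → Exp
  | recv : Val → Exp
  | select : Label → Val → Exp
  | ecase : Val → Exp → Exp → Exp
  | close : Val → Exp

end

def Label.pickE : Label → Exp → Exp → Exp
  | .l1, e, _ => e
  | .l2, _, e => e

def Label.pickV : Label → Val → Val → Val
  | .l1, v, _ => v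
  | .l2, _, v => v

/-- Configurations. -/
inductive Conf : Type
  | exp : Exp → Conf
  | par : Conf → Conf → Conf
  | nuChan : String → String → Ty → Conf → Conf  -- (ν α α' : S) C
  | nuAP : String → Ty → Conf → Conf             -- (ν x : [S]) C

/-- Evaluation contexts E ::= [] | let x = E in e. -/
inductive ECtx : Type
  | hole : ECtx
  | lete : String → ECtx → Exp → ECtx

def ECtx.fill : ECtx → Exp → Exp
  | .hole, e => e
  | .lete x E e2, e => .lete x (E.fill e) e2

/-- Configuration contexts 𝔽 ::= [] | (ν x y : S) 𝔽 | (ν x : [S]) 𝔽 | 𝔽 ∥ C. -/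
inductive CCtx : Type
  | hole : CCtx
  | nuChan : String → String → Ty → CCtx → CCtx
  | nuAP : String → Ty → CCtx → CCtx
  | par : CCtx → Conf → CCtx

def CCtx.fill : CCtx → Conf → Conf
  | .hole, c => c
  | .nuChan a b s F, c => .nuChan a b s (F.fill c)
  | .nuAP x s F, c => .nuAP x s (F.fill c)
  | .par F c2, c => .par (F.fill c) c2

mutual
def Kind.names : Kind → List String
  | .dom s => s.names
  | .arr k1 k2 => k1.names ++ k2.names
  | _ => []
def Ty.names : Ty → List String
  | .var a => [a]
  | .app t1 t2 => t1.names ++ t2.names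
  | .lam a sh b => a :: (sh.names ++ b.names)
  | .all a k c b => a :: (k.names ++ c.names ++ b.names)
  | .arrT s1 t1 g s2 t2 => s1.names ++ t1.names ++ g.names ++ s2.names ++ t2.names
  | .chan d => d.names
  | .ap s => s.names
  | .unit => []
  | .pair t1 t2 => t1.names ++ t2.names
  | .ssend a sh st t s => a :: (sh.names ++ st.names ++ t.names ++ s.names)
  | .srecv a sh st t s => a :: (sh.names ++ st.names ++ t.names ++ s.names)
  | .schoice s1 s2 => s1.names ++ s2.names
  | .sbranch s1 s2 => s1.names ++ s2.names
  | .sEnd => []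
  | .dual s => s.names
  | .sh0 => []
  | .sh1 => []
  | .shpair s1 s2 => s1.names ++ s2.names
  | .dzero => []
  | .dmerge d1 d2 => d1.names ++ d2.names
  | .dproj _ d => d.names
  | .stEmpty => []
  | .stBind d s => d.names ++ s.names
  | .stMerge s1 s2 => s1.names ++ s2.names
def Env.names : Env → List String
  | .nil => []
  | .consVal g x t => x :: (g.names ++ t.names)
  | .consKind g a k => a :: (g.names ++ k.names)
  | .consCstr g d1 d2 => g.names ++ d1.names ++ d2.names
end

mutual
def Val.names : Val → List String
  | .var x => [x]
  | .chan d => d.names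
  | .unit => []
  | .pair v1 v2 => v1.names ++ v2.names
  | .lam st x t e => x :: (st.names ++ t.names ++ e.names)
  | .tlam a k c v => a :: (k.names ++ c.names ++ v.names)
def Exp.names : Exp → List String
  | .val v => v.names
  | .lete x e1 e2 => x :: (e1.names ++ e2.names)
  | .app v1 v2 => v1.names ++ v2.names
  | .proj _ v => v.names
  | .tapp v t => v.names ++ t.names
  | .fork v => v.names
  | .new s => s.names
  | .accept v => v.names
  | .request v => v.names
  | .send v1 v2 => v1.names ++ v2.names
  | .recv v => v.names
  | .select _ v => v.names
  | .ecase v e1 e2 => v.names ++ e1.names ++ e2.names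
  | .close v => v.names
end

def Conf.names : Conf → List String
  | .exp e => e.names
  | .par c1 c2 => c1.names ++ c2.names
  | .nuChan a b s c => a :: b :: (s.names ++ c.names)
  | .nuAP x s c => x :: (s.names ++ c.names)

/-- Type-level substitutions. -/
def TSub := String → Ty

def TSub.upd (σ : TSub) (a : String) : TSub := fun b => if b = a then Ty.var b else σ b
def TSub.updMany (σ : TSub) (as_ : List String) : TSub :=
  fun b => if b ∈ as_ then Ty.var b else σ b
def TSub.id : TSub := Ty.var

mutual
def Kind.subst (σ : TSub) : Kind → Kind
  | .type => .type
  | .session => .session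
  | .state => .state
  | .shape => .shape
  | .dom s => .dom (s.subst σ)
  | .arr k1 k2 => .arr (k1.subst σ) (k2.subst σ)
def Ty.subst (σ : TSub) : Ty → Ty
  | .var a => σ a
  | .app t1 t2 => .app (t1.subst σ) (t2.subst σ)
  | .lam a sh b => .lam a (sh.subst σ) (b.subst (σ.upd a))
  | .all a k c b => .all a (k.subst σ) (c.subst (σ.upd a)) (b.subst (σ.upd a))
  | .arrT s1 t1 g s2 t2 =>
      .arrT (s1.subst σ) (t1.subst σ) (g.subst σ)
        (s2.subst (σ.updMany g.boundNames)) (t2.subst (σ.updMany g.boundNames))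
  | .chan d => .chan (d.subst σ)
  | .ap s => .ap (s.subst σ)
  | .unit => .unit
  | .pair t1 t2 => .pair (t1.subst σ) (t2.subst σ)
  | .ssend a sh st t s =>
      .ssend a (sh.subst σ) (st.subst (σ.upd a)) (t.subst (σ.upd a)) (s.subst σ)
  | .srecv a sh st t s =>
      .srecv a (sh.subst σ) (st.subst (σ.upd a)) (t.subst (σ.upd a)) (s.subst σ)
  | .schoice s1 s2 => .schoice (s1.subst σ) (s2.subst σ)
  | .sbranch s1 s2 => .sbranch (s1.subst σ) (s2.subst σ)
  | .sEnd => .sEnd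
  | .dual s => .dual (s.subst σ)
  | .sh0 => .sh0
  | .sh1 => .sh1
  | .shpair s1 s2 => .shpair (s1.subst σ) (s2.subst σ)
  | .dzero => .dzero
  | .dmerge d1 d2 => .dmerge (d1.subst σ) (d2.subst σ)
  | .dproj l d => .dproj l (d.subst σ)
  | .stEmpty => .stEmpty
  | .stBind d s => .stBind (d.subst σ) (s.subst σ)
  | .stMerge s1 s2 => .stMerge (s1.subst σ) (s2.subst σ)
def Env.subst (σ : TSub) : Env → Env
  | .nil => .nil
  | .consVal g x t => .consVal (g.subst σ) x (t.subst σ)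
  | .consKind g a k => .consKind (g.subst σ) a (k.subst σ)
  | .consCstr g d1 d2 => .consCstr (g.subst σ) (d1.subst σ) (d2.subst σ)
end

/-- Substitutions mapping value variables to values and type variables to types. -/
structure Subst where
  onVal : String → Val
  onTy : TSub

def Subst.id : Subst := ⟨Val.var, Ty.var⟩
def Subst.updV (σ : Subst) (x : String) : Subst :=
  ⟨fun y => if y = x then Val.var y else σ.onVal y, σ.onTy⟩
def Subst.updT (σ : Subst) (a : String) : Subst := ⟨σ.onVal, σ.onTy.upd a⟩
/-- (σ, x ↦ v) -/
def Subst.extV (σ : Subst) (x : String) (v : Val) : Subst :=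
  ⟨fun y => if y = x then v else σ.onVal y, σ.onTy⟩
/-- (σ, α ↦ T) -/
def Subst.extT (σ : Subst) (a : String) (t : Ty) : Subst :=
  ⟨σ.onVal, fun b => if b = a then t else σ.onTy b⟩
/-- (σ, id) on the names bound by Γ. -/
def Subst.extIdEnv (σ : Subst) (g : Env) : Subst :=
  ⟨fun y => if y ∈ g.boundNames then Val.var y else σ.onVal y,
   fun b => if b ∈ g.boundNames then Ty.var b else σ.onTy b⟩

mutual
def Val.subst (σ : Subst) : Val → Val
  | .var x => σ.onVal x
  | .chan d => .chan (d.subst σ.onTy)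
  | .unit => .unit
  | .pair v1 v2 => .pair (v1.subst σ) (v2.subst σ)
  | .lam st x t e => .lam (st.subst σ.onTy) x (t.subst σ.onTy) (e.subst (σ.updV x))
  | .tlam a k c v => .tlam a (k.subst σ.onTy) (c.subst σ.onTy) (v.subst (σ.updT a))
def Exp.subst (σ : Subst) : Exp → Exp
  | .val v => .val (v.subst σ)
  | .lete x e1 e2 => .lete x (e1.subst σ) (e2.subst (σ.updV x))
  | .app v1 v2 => .app (v1.subst σ) (v2.subst σ)
  | .proj l v => .proj l (v.subst σ)
  | .tapp v t => .tapp (v.subst σ) (t.subst σ.onTy)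
  | .fork v => .fork (v.subst σ)
  | .new s => .new (s.subst σ.onTy)
  | .accept v => .accept (v.subst σ)
  | .request v => .request (v.subst σ)
  | .send v1 v2 => .send (v1.subst σ) (v2.subst σ)
  | .recv v => .recv (v.subst σ)
  | .select l v => .select l (v.subst σ)
  | .ecase v e1 e2 => .ecase (v.subst σ) (e1.subst σ) (e2.subst σ)
  | .close v => .close (v.subst σ)
end

/-- Single type-variable substitution [t/a]. -/
def tsub1 (a : String) (t : Ty) : TSub := fun b => if b = a then t else Ty.var b
def Ty.subst1 (tgt : Ty) (a : String) (t : Ty) : Ty := tgt.subst (tsub1 a t)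
def Env.subst1 (g : Env) (a : String) (t : Ty) : Env := g.subst (tsub1 a t)
def Exp.substV1 (e : Exp) (x : String) (v : Val) : Exp :=
  e.subst ⟨fun y => if y = x then v else Val.var y, Ty.var⟩
def Val.substT1 (w : Val) (a : String) (t : Ty) : Val := w.subst ⟨Val.var, tsub1 a t⟩

mutual

/-- Context formation ⊢ Γ. -/
inductive CtxWf : Env → Prop
  | nil : CtxWf .nil
  | consKind : CtxWf g → KindWf g k → a ∉ g.boundNames → CtxWf (.consKind g a k)
  | consVal : CtxWf g → HasKind g t .type → x ∉ g.boundNames → CtxWf (.consVal g x t)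
  | consCstr : CtxWf g → HasKind g d1 (.dom s1) → HasKind g d2 (.dom s2) →
      CtxWf (.consCstr g d1 d2)

/-- Kind formation Γ ⊢ κ. -/
inductive KindWf : Env → Kind → Prop
  | type : KindWf g .type
  | session : KindWf g .session
  | state : KindWf g .state
  | shape : KindWf g .shape
  | dom : HasKind g s .shape → KindWf g (.dom s)
  | arr : KindWf g k1 → KindWf g k2 → KindWf g (.arr k1 k2)

/-- Kinding Γ ⊢ T : κ. -/
inductive HasKind : Env → Ty → Kind → Prop
  | var : Env.MemKind g a k → HasKind g (.var a) k
  | app : HasKind g t1 (.arr k1 k2) → HasKind g t2 k1 → HasKind g (.app t1 t2) k2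
  | lam : HasKind g sh .shape →
      HasKind (.consKind g.restrictNonDom a (.dom sh)) body k →
      (k = .type ∨ k = .state) →
      HasKind g (.lam a sh body) (.arr (.dom sh) k)
  | all : CtxWf ((Env.consKind g a k).append c) →
      HasKind ((Env.consKind g a k).append c) body .type →
      HasKind g (.all a k c body) .type
  | arrT : HasKind g st1 .state → HasKind g t1 .type →
      g2.isDomEnv → CtxWf (g ⋉ g2) →
      HasKind (g ⋉ g2) st2 .state → HasKind (g ⋉ g2) t2 .type →
      HasKind g (.arrT st1 t1 g2 st2 t2) .type
  | chan : HasKind g d (.dom .sh1) → HasKind g (.chan d) .type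
  | ap : HasKind g s .session → HasKind g (.ap s) .type
  | unit : HasKind g .unit .type
  | pair : HasKind g t1 .type → HasKind g t2 .type → HasKind g (.pair t1 t2) .type
  | ssend : HasKind g sh .shape →
      HasKind (.consKind g.restrictNonDom a (.dom sh)) st .state →
      HasKind (.consKind g.restrictNonDom a (.dom sh)) t .type →
      HasKind g s .session →
      HasKind g (.ssend a sh st t s) .session
  | srecv : HasKind g sh .shape →
      HasKind (.consKind g.restrictNonDom a (.dom sh)) st .state →
      HasKind (.consKind g.restrictNonDom a (.dom sh)) t .type →
      HasKind g s .session →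
      HasKind g (.srecv a sh st t s) .session
  | schoice : HasKind g s1 .session → HasKind g s2 .session →
      HasKind g (.schoice s1 s2) .session
  | sbranch : HasKind g s1 .session → HasKind g s2 .session →
      HasKind g (.sbranch s1 s2) .session
  | sEnd : HasKind g .sEnd .session
  | dual : HasKind g s .session → HasKind g (.dual s) .session
  | sh0 : HasKind g .sh0 .shape
  | sh1 : HasKind g .sh1 .shape
  | shpair : HasKind g s1 .shape → HasKind g s2 .shape →
      HasKind g (.shpair s1 s2) .shape
  | dzero : HasKind g .dzero (.dom .sh0)
  | dmerge : HasKind g d1 (.dom s1) → HasKind g d2 (.dom s2) →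
      EntailsD g d1 d2 → HasKind g (.dmerge d1 d2) (.dom (.shpair s1 s2))
  | dproj : HasKind g d (.dom (.shpair s1 s2)) →
      HasKind g (.dproj l d) (.dom (Label.pick l s1 s2))
  | stEmpty : HasKind g .stEmpty .state
  | stBind : HasKind g d (.dom .sh1) → HasKind g s .session →
      HasKind g (.stBind d s) .state
  | stMerge : HasKind g s1 .state → HasKind g s2 .state →
      Entails g (stDisjCstr s1 s2) → HasKind g (.stMerge s1 s2) .state

/-- Constraint entailment for a single disjointness Γ ⊨ D₁ # D₂. -/
inductive EntailsD : Env → Ty → Ty → Prop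
  | ax : Env.MemCstr g d1 d2 → EntailsD g d1 d2
  | symm : EntailsD g d1 d2 → EntailsD g d2 d1
  | zero : EntailsD g .dzero d
  | merge : EntailsD g d1 d → EntailsD g d2 d → EntailsD g (.dmerge d1 d2) d
  | split1 : EntailsD g (.dmerge d1 d2) d → EntailsD g d1 d
  | split2 : EntailsD g (.dmerge d1 d2) d → EntailsD g d2 d
  | projMerge : EntailsD g (.dproj .l1 d) (.dproj .l2 d)
  | projSplit : EntailsD g d1 d2 → EntailsD g (.dproj l d1) d2

/-- Constraint entailment Γ ⊨ C. -/
inductive Entails : Env → Env → Prop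
  | nil : Entails g .nil
  | cons : Entails g c → EntailsD g d1 d2 → Entails g (.consCstr c d1 d2)

end

/-- Type conversion T ≡ T'. -/
inductive TyConv : Ty → Ty → Prop
  | refl : TyConv t t
  | symm : TyConv t1 t2 → TyConv t2 t1
  | trans : TyConv t1 t2 → TyConv t2 t3 → TyConv t1 t3
  | beta : TyConv (.app (.lam a sh body) d) (body.subst1 a d)
  | projPair : TyConv (.dproj l (.dmerge d1 d2)) (Label.pick l d1 d2)
  | dualEnd : TyConv (.dual .sEnd) .sEnd
  | dualDual : TyConv (.dual (.dual s)) s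
  | dualSend : TyConv (.dual (.ssend a sh st t s)) (.srecv a sh st t (.dual s))
  | dualRecv : TyConv (.dual (.srecv a sh st t s)) (.ssend a sh st t (.dual s))
  | dualChoice : TyConv (.dual (.schoice s1 s2)) (.sbranch (.dual s1) (.dual s2))
  | dualBranch : TyConv (.dual (.sbranch s1 s2)) (.schoice (.dual s1) (.dual s2))
  -- congruence
  | capp : TyConv t1 t1' → TyConv t2 t2' → TyConv (.app t1 t2) (.app t1' t2')
  | clam : TyConv sh sh' → TyConv b b' → TyConv (.lam a sh b) (.lam a sh' b')
  | call : TyConv b b' → TyConv (.all a k c b) (.all a k c b')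
  | carrT : TyConv s1 s1' → TyConv t1 t1' → TyConv s2 s2' → TyConv t2 t2' →
      TyConv (.arrT s1 t1 g s2 t2) (.arrT s1' t1' g s2' t2')
  | cchan : TyConv d d' → TyConv (.chan d) (.chan d')
  | cap : TyConv s s' → TyConv (.ap s) (.ap s')
  | cpair : TyConv t1 t1' → TyConv t2 t2' → TyConv (.pair t1 t2) (.pair t1' t2')
  | cssend : TyConv sh sh' → TyConv st st' → TyConv t t' → TyConv s s' →
      TyConv (.ssend a sh st t s) (.ssend a sh' st' t' s')
  | csrecv : TyConv sh sh' → TyConv st st' → TyConv t t' → TyConv s s' →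
      TyConv (.srecv a sh st t s) (.srecv a sh' st' t' s')
  | cschoice : TyConv s1 s1' → TyConv s2 s2' → TyConv (.schoice s1 s2) (.schoice s1' s2')
  | csbranch : TyConv s1 s1' → TyConv s2 s2' → TyConv (.sbranch s1 s2) (.sbranch s1' s2')
  | cdual : TyConv s s' → TyConv (.dual s) (.dual s')
  | cshpair : TyConv s1 s1' → TyConv s2 s2' → TyConv (.shpair s1 s2) (.shpair s1' s2')
  | cdmerge : TyConv d1 d1' → TyConv d2 d2' → TyConv (.dmerge d1 d2) (.dmerge d1' d2')
  | cdproj : TyConv d d' → TyConv (.dproj l d) (.dproj l d')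
  | cstBind : TyConv d d' → TyConv s s' → TyConv (.stBind d s) (.stBind d' s')
  | cstMerge : TyConv s1 s1' → TyConv s2 s2' → TyConv (.stMerge s1 s2) (.stMerge s1' s2')

mutual

/-- Value typing Γ ⊢ v : T. -/
inductive ValTy : Env → Val → Ty → Prop
  | var : Env.MemVal g x t → ValTy g (.var x) t
  | unit : ValTy g .unit .unit
  | pair : ValTy g v1 t1 → ValTy g v2 t2 → ValTy g (.pair v1 v2) (.pair t1 t2)
  | chan : HasKind g d (.dom .sh1) → ValTy g (.chan d) (.chan d)
  | lam : HasKind g (.arrT st1 t1 g2 st2 t2) .type →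
      ExpTy (.consVal g x t1) st1 e g2 st2 t2 →
      ValTy g (.lam st1 x t1 e) (.arrT st1 t1 g2 st2 t2)
  | tlam : HasKind g (.all a k c t) .type →
      ValTy ((Env.consKind g a k).append c) v t →
      ValTy g (.tlam a k c v) (.all a k c t)

/-- Expression typing Γ₁;Σ₁ ⊢ e : ∃Γ₂.(Σ₂;T). -/
inductive ExpTy : Env → Ty → Exp → Env → Ty → Ty → Prop
  | val : ValTy g v t → ExpTy g st (.val v) .nil st t
  | lete : ExpTy g st1 e1 g2 st2' t1 →
      ExpTy (Env.consVal (g ⋉ g2) x t1) (.stMerge st2 st2') e2 g3 st3 t2 →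
      HasKind (Env.consVal (g ⋉ g2) x t1) (.stMerge st2 st2') .state →
      ExpTy g (.stMerge st1 st2) (.lete x e1 e2) (g2.append g3) st3 t2
  | app : ValTy g v1 (.arrT st1 t1 g2 st2 t2) → ValTy g v2 t1 →
      ExpTy g st1 (.app v1 v2) g2 st2 t2
  | proj : ValTy g v (.pair t1 t2) →
      ExpTy g .stEmpty (.proj l v) .nil .stEmpty (Label.pick l t1 t2)
  | tapp : ValTy g v (.all a k c t) → HasKind g t' k →
      Entails g (c.subst1 a t') → TyConv (t.subst1 a t') t'' →
      ExpTy g .stEmpty (.tapp v t') .nil .stEmpty t''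
  | new : HasKind g s .session → ExpTy g .stEmpty (.new s) .nil .stEmpty (.ap s)
  | request : ValTy g v (.ap s) → a ∉ g.boundNames →
      ExpTy g .stEmpty (.request v)
        (.consKind .nil a (.dom .sh1)) (.stBind (.var a) s) (.chan (.var a))
  | accept : ValTy g v (.ap s) → a ∉ g.boundNames →
      ExpTy g .stEmpty (.accept v)
        (.consKind .nil a (.dom .sh1)) (.stBind (.var a) (.dual s)) (.chan (.var a))
  | send : HasKind g d' (.dom sh) →
      TyConv (st'.subst1 a d') st1 →
      TyConv (t'.subst1 a d') t →
      ValTy g v1 t → ValTy g v2 (.chan d) →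
      ExpTy g (.stMerge st1 (.stBind d (.ssend a sh st' t' s)))
        (.send v1 v2) .nil (.stBind d s) .unit
  | recv : ValTy g v (.chan d) → a ∉ g.boundNames →
      ExpTy g (.stBind d (.srecv a sh st' t' s)) (.recv v)
        (.consKind .nil a (.dom sh)) (.stMerge st' (.stBind d s)) t'
  | fork : ValTy g v (.arrT st .unit .nil .stEmpty .unit) →
      ExpTy g st (.fork v) .nil .stEmpty .unit
  | close : ValTy g v (.chan d) →
      ExpTy g (.stBind d .sEnd) (.close v) .nil .stEmpty .unit
  | select : ValTy g v (.chan d) →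
      ExpTy g (.stBind d (.schoice s1 s2)) (.select l v) .nil
        (.stBind d (Label.pick l s1 s2)) .unit
  | ecase : ValTy g v (.chan d) →
      ExpTy g (.stMerge st (.stBind d s1)) e1 g' st' t →
      ExpTy g (.stMerge st (.stBind d s2)) e2 g' st' t →
      ExpTy g (.stMerge st (.stBind d (.sbranch s1 s2))) (.ecase v e1 e2) g' st' t

end

/-- Configuration typing Γ;Σ ⊢ C. -/
inductive ConfTy : Env → Ty → Conf → Prop
  | exp : ExpTy g st e g' .stEmpty t → ConfTy g st (.exp e)
  | par : ConfTy g st1 c1 → ConfTy g st2 c2 → ConfTy g (.stMerge st1 st2) (.par c1 c2)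
  | nuChan : a ∉ g.names → b ∉ g.names → a ≠ b →
      HasKind g s .session →
      ConfTy ((g ⋉ (Env.consKind .nil a (.dom .sh1))) ⋉ (Env.consKind .nil b (.dom .sh1)))
        (.stMerge st (.stMerge (.stBind (.var a) s) (.stBind (.var b) (.dual s)))) c →
      ConfTy g st (.nuChan a b s c)
  | nuChanClosed : a ∉ g.names → b ∉ g.names → a ≠ b →
      ConfTy ((g ⋉ (Env.consKind .nil a (.dom .sh1))) ⋉ (Env.consKind .nil b (.dom .sh1))) st c →
      ConfTy g st (.nuChan a b .sEnd c)
  | nuAP : x ∉ g.names → HasKind g s .session →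
      ConfTy (.consVal g x (.ap s)) st c →
      ConfTy g st (.nuAP x s c)

/-- Expression reduction e ↪ e'. -/
inductive ExpRed : Exp → Exp → Prop
  | betaFun : ExpRed (.app (.lam st x t e) v) (e.substV1 x v)
  | betaPair : ExpRed (.proj l (.pair v1 v2)) (.val (Label.pickV l v1 v2))
  | betaAll : ExpRed (.tapp (.tlam a k c v) t) (.val (v.substT1 a t))
  | betaLet : ExpRed (.lete x (.val v) e) (e.substV1 x v)
  | lift : ExpRed e e' → ExpRed (.lete x e e2) (.lete x e' e2)

/-- Configuration congruence C ≅ C'. -/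
inductive Cong : Conf → Conf → Prop
  | refl : Cong c c
  | symm : Cong c1 c2 → Cong c2 c1
  | trans : Cong c1 c2 → Cong c2 c3 → Cong c1 c3
  | null : Cong (.par c (.exp (.val .unit))) c
  | comm : Cong (.par c1 c2) (.par c2 c1)
  | assoc : Cong (.par (.par c1 c2) c3) (.par c1 (.par c2 c3))
  | swap : Cong (.nuChan a b s c) (.nuChan b a (.dual s) c)
  | scopeChan : a ∉ c2.names → b ∉ c2.names →
      Cong (.par (.nuChan a b s c1) c2) (.nuChan a b s (.par c1 c2))
  | scopeAP : x ∉ c2.names →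
      Cong (.par (.nuAP x s c1) c2) (.nuAP x s (.par c1 c2))
  | parL : Cong c1 c1' → Cong (.par c1 c2) (.par c1' c2)
  | cnuChan : Cong c c' → Cong (.nuChan a b s c) (.nuChan a b s c')
  | cnuAP : Cong c c' → Cong (.nuAP x s c) (.nuAP x s c')

/-- Configuration reduction C ↪ C'. -/
inductive ConfRed : Conf → Conf → Prop
  | expr : ExpRed e e' → ConfRed (.exp e) (.exp e')
  | fork : ConfRed (.exp (ECtx.fill E (.fork v)))
      (.par (.exp (.app v .unit)) (.exp (ECtx.fill E (.val .unit))))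
  | new : x ∉ (ECtx.fill E (Exp.new s)).names →
      ConfRed (.exp (ECtx.fill E (.new s)))
        (.nuAP x s (.exp (ECtx.fill E (.val (.var x)))))
  | requestAccept :
      Cong c (.par (.par (.exp (ECtx.fill E1 (.request (.var x))))
                         (.exp (ECtx.fill E2 (.accept (.var x))))) c') →
      a ∉ c.names → b ∉ c.names → a ≠ b →
      ConfRed (.nuAP x s c)
        (.nuAP x s (.nuChan a b s
          (.par (.par (.exp (ECtx.fill E1 (.val (.chan (.var a)))))
                      (.exp (ECtx.fill E2 (.val (.chan (.var b)))))) c')))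
  | sendRecv :
      Cong c (.par (.par (.exp (ECtx.fill E1 (.send v (.chan (.var a)))))
                         (.exp (ECtx.fill E2 (.recv (.chan (.var b)))))) c') →
      ConfRed (.nuChan a b (.ssend a' sh st t s) c)
        (.nuChan a b s
          (.par (.par (.exp (ECtx.fill E1 (.val .unit)))
                      (.exp (ECtx.fill E2 (.val v)))) c'))
  | selectCase :
      Cong c (.par (.par (.exp (ECtx.fill E1 (.select l (.chan (.var a)))))
                         (.exp (ECtx.fill E2 (.ecase (.chan (.var b)) e1 e2)))) c') →
      ConfRed (.nuChan a b (.schoice s1 s2) c)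
        (.nuChan a b (Label.pick l s1 s2)
          (.par (.par (.exp (ECtx.fill E1 (.val .unit)))
                      (.exp (ECtx.fill E2 (Label.pickE l e1 e2)))) c'))
  | close :
      Cong c (.par (.par (.exp (ECtx.fill E1 (.close (.chan (.var a)))))
                         (.exp (ECtx.fill E2 (.close (.chan (.var b)))))) c') →
      ConfRed (.nuChan a b .sEnd c)
        (.nuChan a b .sEnd
          (.par (.par (.exp (ECtx.fill E1 (.val .unit)))
                      (.exp (ECtx.fill E2 (.val .unit)))) c'))
  | lift : ConfRed c c' → ConfRed (CCtx.fill F c) (CCtx.fill F c')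

/-- IsValue e: e is a syntactic value. -/
def IsValue (e : Exp) : Prop := ∃ v, e = Exp.val v

/-- IsComm e: e is stuck on a communication (or fork). -/
inductive IsComm : Exp → Prop
  | fork : IsComm (.fork (.lam st x t e))
  | new : IsComm (.new s)
  | accept : IsComm (.accept v)
  | request : IsComm (.request v)
  | send : IsComm (.send v (.chan d))
  | recv : IsComm (.recv (.chan d))
  | select : IsComm (.select l (.chan d))
  | ecase : IsComm (.ecase (.chan d) e1 e2)
  | close : IsComm (.close (.chan d))
  | lete : IsComm e1 → IsComm (.lete x e1 e2)

/-- IsOuter Γ: Γ binds only kinds, constraints, and access points. -/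
inductive IsOuter : Env → Prop
  | nil : IsOuter .nil
  | kind : IsOuter g → IsOuter (.consKind g a k)
  | ap : IsOuter g → IsOuter (.consVal g x (.ap s))
  | cstr : IsOuter g → IsOuter (.consCstr g d1 d2)

/-- IsFinal C: all processes are values, all channels concluded. -/
inductive IsFinal : Conf → Prop
  | val : IsFinal (.exp (.val v))
  | par : IsFinal c1 → IsFinal c2 → IsFinal (.par c1 c2)
  | nuAP : IsFinal c → IsFinal (.nuAP x s c)
  | nuChan : IsFinal c → IsFinal (.nuChan a b .sEnd c)

/-- IsDeadlock C. -/
def IsDeadlock (c : Conf) : Prop :=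
  (∀ (F : CCtx) (e : Exp), c = CCtx.fill F (.exp e) →
     (IsValue e ∨ (IsComm e ∧ (∀ v, e ≠ .fork v) ∧ (∀ s, e ≠ .new s)))) ∧
  (∀ (F : CCtx) (x : String) (s : Ty) (c' : Conf), c = CCtx.fill F (.nuAP x s c') →
     ((∀ (F1 : CCtx) (E1 : ECtx),
         c' = CCtx.fill F1 (.exp (ECtx.fill E1 (.request (.var x)))) →
         ¬ ∃ (F2 : CCtx) (E2 : ECtx),
             c' = CCtx.fill F2 (.exp (ECtx.fill E2 (.accept (.var x))))) ∧
      (∀ (F1 : CCtx) (E1 : ECtx),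
         c' = CCtx.fill F1 (.exp (ECtx.fill E1 (.accept (.var x)))) →
         ¬ ∃ (F2 : CCtx) (E2 : ECtx),
             c' = CCtx.fill F2 (.exp (ECtx.fill E2 (.request (.var x))))))) ∧
  (∀ (F : CCtx) (a1 a2 : String) (s : Ty) (c' : Conf),
     c = CCtx.fill F (.nuChan a1 a2 s c') →
     ∀ (b d : String), ((b = a1 ∧ d = a2) ∨ (b = a2 ∧ d = a1)) →
       ((∀ (F1 : CCtx) (E1 : ECtx) (v : Val),
           c' = CCtx.fill F1 (.exp (ECtx.fill E1 (.send v (.chan (.var b))))) →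
           ¬ ∃ (F2 : CCtx) (E2 : ECtx),
               c' = CCtx.fill F2 (.exp (ECtx.fill E2 (.recv (.chan (.var d)))))) ∧
        (∀ (F1 : CCtx) (E1 : ECtx),
           c' = CCtx.fill F1 (.exp (ECtx.fill E1 (.recv (.chan (.var b))))) →
           ¬ ∃ (F2 : CCtx) (E2 : ECtx) (v : Val),
               c' = CCtx.fill F2 (.exp (ECtx.fill E2 (.send v (.chan (.var d)))))) ∧
        (∀ (F1 : CCtx) (E1 : ECtx) (l : Label),
           c' = CCtx.fill F1 (.exp (ECtx.fill E1 (.select l (.chan (.var b))))) →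
           ¬ ∃ (F2 : CCtx) (E2 : ECtx) (e1 e2 : Exp),
               c' = CCtx.fill F2 (.exp (ECtx.fill E2 (.ecase (.chan (.var d)) e1 e2)))) ∧
        (∀ (F1 : CCtx) (E1 : ECtx) (e1 e2 : Exp),
           c' = CCtx.fill F1 (.exp (ECtx.fill E1 (.ecase (.chan (.var b)) e1 e2))) →
           ¬ ∃ (F2 : CCtx) (E2 : ECtx) (l : Label),
               c' = CCtx.fill F2 (.exp (ECtx.fill E2 (.select l (.chan (.var d)))))) ∧
        (∀ (F1 : CCtx) (E1 : ECtx),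
           c' = CCtx.fill F1 (.exp (ECtx.fill E1 (.close (.chan (.var b))))) →
           ¬ ∃ (F2 : CCtx) (E2 : ECtx),
               c' = CCtx.fill F2 (.exp (ECtx.fill E2 (.close (.chan (.var d))))))))

/-- Order-preserving embedding Γ₁ ≼ Γ₂. -/
def OPE (g1 g2 : Env) : Prop :=
  CtxWf g1 ∧ CtxWf g2 ∧
  (∀ x t, Env.MemVal g1 x t → Env.MemVal g2 x t) ∧
  (∀ a k, Env.MemKind g1 a k → Env.MemKind g2 a k) ∧
  (∀ d1 d2, Env.MemCstr g1 d1 d2 → Env.MemCstr g2 d1 d2)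

/-- Substitution typing ⊢ σ : Γ₁ ⇒ Γ₂. -/
def SubstTyped (σ : Subst) (g1 g2 : Env) : Prop :=
  CtxWf g1 ∧ CtxWf g2 ∧
  (∀ x t, Env.MemVal g1 x t → ValTy g2 (σ.onVal x) (t.subst σ.onTy)) ∧
  (∀ a k, Env.MemKind g1 a k → HasKind g2 (σ.onTy a) (k.subst σ.onTy)) ∧
  (∀ d1 d2, Env.MemCstr g1 d1 d2 → EntailsD g2 (d1.subst σ.onTy) (d2.subst σ.onTy))

/-! The ν-rules and the parallel rule type their body (resp. left component) in an environment
and state computed from the outer judgement alone, never from the body itself. So each layer of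
a configuration context can be peeled off and rebuilt around any configuration with the same
typing, and these layers compose along the context. -/

namespace ConfTy

def Factors (g : Env) (st : Ty) (K : Conf → Conf) (c : Conf) : Prop :=
  ∃ (g' : Env) (st' : Ty), ConfTy g' st' c ∧ ∀ c', ConfTy g' st' c' → ConfTy g st (K c')

variable {g : Env} {st : Ty} {c : Conf}

theorem Factors.comp {K L : Conf → Conf} (hK : Factors g st K (L c))
    (hL : ∀ g' st', ConfTy g' st' (L c) → Factors g' st' L c) :
    Factors g st (K ∘ L) c := by
  obtain ⟨g₁, st₁, h₁, rebuildK⟩ := hK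
  obtain ⟨g₂, st₂, h₂, rebuildL⟩ := hL g₁ st₁ h₁
  exact ⟨g₂, st₂, h₂, fun c' h' => rebuildK _ (rebuildL c' h')⟩

theorem factors_nuChan {a b : String} {s : Ty} (h : ConfTy g st (.nuChan a b s c)) :
    Factors g st (.nuChan a b s) c := by
  cases h with
  | nuChan ha hb hab hs hc => exact ⟨_, _, hc, fun _ => .nuChan ha hb hab hs⟩
  | nuChanClosed ha hb hab hc => exact ⟨_, _, hc, fun _ => .nuChanClosed ha hb hab⟩

theorem factors_nuAP {x : String} {s : Ty} (h : ConfTy g st (.nuAP x s c)) :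
    Factors g st (.nuAP x s) c := by
  cases h with
  | nuAP hx hs hc => exact ⟨_, _, hc, fun _ => .nuAP hx hs⟩

theorem factors_par {c₂ : Conf} (h : ConfTy g st (.par c c₂)) :
    Factors g st (.par · c₂) c := by
  cases h with
  | par h₁ h₂ => exact ⟨_, _, h₁, fun _ h' => .par h' h₂⟩

end ConfTy

/-- Evaluation context typings for configurations in PolyVGR. -/
theorem evaluation_context_typings_for_configurations
    (g : Env) (st : Ty) (F : CCtx) (c : Conf)
    (h : ConfTy g st (CCtx.fill F c)) :
    ∃ (g' : Env) (st' : Ty), ConfTy g' st' c ∧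
      ∀ c', ConfTy g' st' c' → ConfTy g st (CCtx.fill F c') := by
  induction F generalizing g st with
  | hole => exact ⟨g, st, h, fun _ => id⟩
  | nuChan a b s F ih => exact (ConfTy.factors_nuChan h).comp ih
  | nuAP x s F ih => exact (ConfTy.factors_nuAP h).comp ih
  | par F c₂ ih => exact (ConfTy.factors_par h).comp ih
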